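/- arXiv:math/0405028 — 3 statements merged into one kernel-verified Lean document; each statement's English description precedes it below -/
import Mathlib

section
/- Let Γ < Isom(ℍᵏ) be a discrete group and {λ_z}_{z∈∂ℍᵏ} a family of positive finite Borel measures on ∂ℍⁿ satisfying: ρ-equivariance λ_{γz} = ρ(γ)_*λ_z for μ_O-a.e. z; μ_O-integrability of z ↦ ∫φ dλ_z for continuous φ; essential boundedness of z ↦ ||λ_z||; and ||λ_z|| > 0 a.e. Then the measures β_x := μ_x * {λ_z} on ∂ℍⁿ satisfy β_{γx} = ρ(γ)_*β_x for all x ∈ ℍᵏ and γ ∈ Γ. -/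
open MeasureTheory
open scoped ENNReal

namespace MeasureTheory.Measure

variable {α β γ : Type*} [MeasurableSpace α] [MeasurableSpace β] [MeasurableSpace γ]

theorem bind_map {ν : Measure α} {f : α → β} {κ : β → Measure γ} (hf : Measurable f)
    (hκ : Measurable κ) : (ν.map f).bind κ = ν.bind (κ ∘ f) := by
  rw [bind, bind, map_map hκ hf]

theorem map_bind {ν : Measure α} {κ : α → Measure β} {g : β → γ} (hκ : Measurable κ)
    (hg : Measurable g) : (ν.bind κ).map g = ν.bind fun a => (κ a).map g := by
  rw [bind, bind, ← join_map_map hg, map_map (measurable_map g hg) hκ]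
  rfl

end MeasureTheory.Measure

theorem developing_measures_convolution_equivariant_general
    {Hk K N : Type*} [MeasurableSpace K] [MeasurableSpace N]
    {G : Type*} [Group G] [MulAction G Hk] [MulAction G K] [MulAction G N]
    (hKmeas : ∀ γ : G, Measurable fun z : K => γ • z)
    (hNmeas : ∀ γ : G, Measurable fun y : N => γ • y)
    (O : Hk) (δ : ℝ) (BK : Hk → K → ℝ)
    (μ : Hk → Measure K)
    (hμequiv : ∀ (γ : G) (x : Hk), μ (γ • x) = Measure.map (fun z : K => γ • z) (μ x))
    (hμdens : ∀ x : Hk,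
      μ x = (μ O).withDensity fun θ => ENNReal.ofReal (Real.exp (-δ * BK x θ)))
    (lam : K → Measure N) (hlam : Measurable lam)
    -- (1) a.e. ρ-equivariance of the developing measures
    (hlamequiv : ∀ γ : G, ∀ᵐ z ∂μ O, lam (γ • z) = Measure.map (fun y : N => γ • y) (lam z)) :
    ∀ (γ : G) (x : Hk),
      (μ (γ • x)).bind lam = Measure.map (fun y : N => γ • y) ((μ x).bind lam) := by
  intro γ x
  have hac : μ x ≪ μ O := by
    rw [hμdens x]
    exact withDensity_absolutelyContinuous _ _
  rw [hμequiv γ x, Measure.bind_map (hKmeas γ) hlam, Measure.map_bind hlam (hNmeas γ)]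
  exact Measure.bind_congr_right (hac.ae_le (hlamequiv γ))

/-- Equivariance of the measures `β_x = μ_x * {λ_z}`: if `{μ_x}` is the
Patterson–Sullivan family for a discrete group `Γ = G` acting on `ℍᵏ` (with boundary
`K`), satisfying `μ_{γ x} = γ_* μ_x` and `dμ_x = e^{-δ B_K(x,·)} dμ_O`, and if
`{λ_z}_{z ∈ K}` is a family of developing measures for a representation of `Γ` in
`Isom(ℍⁿ)` (acting on the boundary `N`): positive finite measures, a.e.
`ρ`-equivariant, integrable against `μ_O`, with essentially bounded and a.e. positive
total masses — then `β_{γ x} = ρ(γ)_* β_x` for all `x` and `γ`.  Here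
`β_x = μ_x * {λ_z}` is the convolution `(μ x).bind lam`. -/
theorem developing_measures_convolution_equivariant
    {Hk K N : Type*} [MeasurableSpace K] [MeasurableSpace N] [TopologicalSpace N]
    {G : Type*} [Group G] [MulAction G Hk] [MulAction G K] [MulAction G N]
    (hKmeas : ∀ γ : G, Measurable fun z : K => γ • z)
    (hNmeas : ∀ γ : G, Measurable fun y : N => γ • y)
    (O : Hk) (δ : ℝ) (BK : Hk → K → ℝ)
    (μ : Hk → Measure K) [∀ x, IsFiniteMeasure (μ x)]
    (hμequiv : ∀ (γ : G) (x : Hk), μ (γ • x) = Measure.map (fun z : K => γ • z) (μ x))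
    (hμdens : ∀ x : Hk,
      μ x = (μ O).withDensity fun θ => ENNReal.ofReal (Real.exp (-δ * BK x θ)))
    (lam : K → Measure N) (hlam : Measurable lam) [∀ z, IsFiniteMeasure (lam z)]
    -- (1) a.e. ρ-equivariance of the developing measures
    (hlamequiv : ∀ γ : G, ∀ᵐ z ∂μ O, lam (γ • z) = Measure.map (fun y : N => γ • y) (lam z))
    -- (2) integrability of z ↦ ∫ φ dλ_z against μ_O for continuous φ
    (hlamint : ∀ φ : N → ℝ, Continuous φ → Integrable (fun z => ∫ y, φ y ∂lam z) (μ O))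
    -- (3) essential boundedness of z ↦ ‖λ_z‖
    (hlambdd : ∃ C : ℝ≥0∞, C ≠ ⊤ ∧ ∀ᵐ z ∂μ O, lam z Set.univ ≤ C)
    -- (4) a.e. positivity of ‖λ_z‖
    (hlampos : ∀ᵐ z ∂μ O, lam z ≠ 0) :
    ∀ (γ : G) (x : Hk),
      (μ (γ • x)).bind lam = Measure.map (fun y : N => γ • y) ((μ x).bind lam) :=
  developing_measures_convolution_equivariant_general hKmeas hNmeas O δ BK μ hμequiv hμdens lam hlam
    hlamequiv
end

section
/- Let μ_O be a finite Borel measure on ∂ℍᵏ, Γ a non-elementary discrete group with Patterson–Sullivan family {μ_x}. For ω ∈ ∂ℍᵏ and α ∈ (0,π/2), define the maximal operator M_α g(ω) = sup over γ ∈ Γ with γO in the vertical cone C_ω(α) of ∫ g dμ_{γO}, and the Hardy–Littlewood operator N g(ω) = sup_{r>0} (1/μ_O(B(ω,r))) ∫_{B(ω,r)} g dμ_O. Then there is a constant c = c(α) such that for all nonnegative g ∈ L¹(∂ℍᵏ, μ_O) and all ω, M_α g(ω) ≤ c · N g(ω). -/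
open MeasureTheory Metric
open scoped ENNReal

/-!
A point `(x, t)` of the cone `‖x - ω‖ ≤ tan α ⋅ t` sees the boundary essentially like the point
`(ω, t)` above the vertex: by the triangle inequality
`dist(ξ, ω)² + t² ≤ 2(1 + tan² α)(‖ξ - x‖² + t²)`, and `1 + ‖ξ‖² ≤ 1 + R²` on the support of `μ`.
The remaining kernel `(t / (dist(ξ, ω)² + t²))ᵟ` is at most `(4t / (2ʲt)²)ᵟ` on the first dyadic
ball `B(ω, 2ʲ t)` containing `ξ`, and the growth bound `μ(B(ω, 2ʲ t)) ≤ c₀ (2ʲ t)ᵟ` makes that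
ball contribute at most `c₀ 4ᵟ 2^{-jδ}` times the Hardy–Littlewood maximal function; the
geometric series converges since `δ > 0`.
-/

section HardyLittlewood

variable {X : Type*} [PseudoMetricSpace X] [MeasurableSpace X]

noncomputable def hardyLittlewoodMaximal (μ : Measure X) (g : X → ℝ≥0∞) (ω : X) : ℝ≥0∞ :=
  ⨆ (r : ℝ) (_ : 0 < r), (μ (ball ω r))⁻¹ * ∫⁻ ξ in ball ω r, g ξ ∂μ

lemma setLIntegral_ball_le_measure_mul_hardyLittlewoodMaximal (μ : Measure X)
    (g : X → ℝ≥0∞) {ω : X} {r : ℝ} (hr : 0 < r) (hμ : μ (ball ω r) ≠ ∞) :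
    ∫⁻ ξ in ball ω r, g ξ ∂μ ≤ μ (ball ω r) * hardyLittlewoodMaximal μ g ω := by
  calc ∫⁻ ξ in ball ω r, g ξ ∂μ
      = μ (ball ω r) * ((μ (ball ω r))⁻¹ * ∫⁻ ξ in ball ω r, g ξ ∂μ) :=
        (ENNReal.mul_inv_cancel_left' (fun h => setLIntegral_measure_zero _ _ h)
          fun h => (hμ h).elim).symm
    _ ≤ μ (ball ω r) * hardyLittlewoodMaximal μ g ω := by
        gcongr
        exact le_iSup₂ (f := fun r (_ : 0 < r) =>
          (μ (ball ω r))⁻¹ * ∫⁻ ξ in ball ω r, g ξ ∂μ) r hr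

end HardyLittlewood

lemma exists_dyadic_radius {t d : ℝ} (ht : 0 < t) :
    ∃ j : ℕ, d < 2 ^ j * t ∧ (2 ^ j * t) ^ 2 ≤ 4 * (d ^ 2 + t ^ 2) := by
  rcases lt_or_ge d t with hdt | htd
  · exact ⟨0, by simpa using hdt, by nlinarith⟩
  · obtain ⟨n, hn, hn'⟩ := exists_nat_pow_near ((one_le_div ht).mpr htd) one_lt_two
    rw [le_div_iff₀ ht] at hn
    rw [div_lt_iff₀ ht] at hn'
    refine ⟨n + 1, hn', ?_⟩
    have h2n : 0 ≤ 2 ^ n * t := by positivity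
    calc (2 ^ (n + 1) * t) ^ 2 = 4 * (2 ^ n * t) ^ 2 := by ring
      _ ≤ 4 * (d ^ 2 + t ^ 2) := by nlinarith

lemma div_sq_add_sq_le_of_sq_le {t d r : ℝ} (ht : 0 ≤ t) (hr : 0 < r)
    (h : r ^ 2 ≤ 4 * (d ^ 2 + t ^ 2)) : t / (d ^ 2 + t ^ 2) ≤ 4 * t / r ^ 2 := by
  rcases ht.eq_or_lt with rfl | ht
  · simp
  rw [div_le_div_iff₀ (by positivity) (by positivity)]
  nlinarith

lemma rpow_dyadic_weight_mul_rpow_radius {t δ : ℝ} (ht : 0 < t) (j : ℕ) :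
    (4 * t / (2 ^ j * t) ^ 2) ^ δ * (2 ^ j * t) ^ δ = 4 ^ δ * ((1 / 2) ^ δ) ^ j := by
  have hsimp : 4 * t / (2 ^ j * t) ^ 2 * (2 ^ j * t) = 4 * (1 / 2) ^ j := by
    field_simp
    rw [← mul_pow]
    norm_num
  rw [← Real.mul_rpow (by positivity) (by positivity), hsimp,
    Real.mul_rpow (by norm_num) (by positivity), Real.rpow_pow_comm (by norm_num)]

section Poisson

variable {X : Type*} [PseudoMetricSpace X]

lemma ofReal_poisson_le_tsum_indicator_ball {ω ξ : X} {t δ : ℝ} (ht : 0 < t) (hδ : 0 ≤ δ) :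
    ENNReal.ofReal ((t / (dist ξ ω ^ 2 + t ^ 2)) ^ δ) ≤
      ∑' j : ℕ, (ball ω (2 ^ j * t)).indicator
        (fun _ => ENNReal.ofReal ((4 * t / (2 ^ j * t) ^ 2) ^ δ)) ξ := by
  obtain ⟨j, hj, hj'⟩ := exists_dyadic_radius (d := dist ξ ω) ht
  refine le_trans ?_ (ENNReal.le_tsum j)
  rw [Set.indicator_of_mem (mem_ball.mpr hj)]
  exact ENNReal.ofReal_le_ofReal <| Real.rpow_le_rpow (by positivity)
    (div_sq_add_sq_le_of_sq_le ht.le (by positivity) hj') hδ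

variable [MeasurableSpace X]

lemma ofReal_dyadic_weight_mul_setLIntegral_le {μ : Measure X} {g : X → ℝ≥0∞} {ω : X}
    {t δ c₀ : ℝ} (ht : 0 < t)
    (hgrowth : ∀ r, 0 < r → μ (ball ω r) ≤ ENNReal.ofReal (c₀ * r ^ δ)) (j : ℕ) :
    ENNReal.ofReal ((4 * t / (2 ^ j * t) ^ 2) ^ δ) * ∫⁻ ξ in ball ω (2 ^ j * t), g ξ ∂μ ≤
      ENNReal.ofReal (c₀ * 4 ^ δ) * ENNReal.ofReal ((1 / 2) ^ δ) ^ j *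
        hardyLittlewoodMaximal μ g ω := by
  have hr : (0 : ℝ) < 2 ^ j * t := by positivity
  have hμ := hgrowth _ hr
  calc ENNReal.ofReal ((4 * t / (2 ^ j * t) ^ 2) ^ δ) * ∫⁻ ξ in ball ω (2 ^ j * t), g ξ ∂μ
      ≤ ENNReal.ofReal ((4 * t / (2 ^ j * t) ^ 2) ^ δ) *
          (μ (ball ω (2 ^ j * t)) * hardyLittlewoodMaximal μ g ω) := by
        gcongr
        exact setLIntegral_ball_le_measure_mul_hardyLittlewoodMaximal μ g hr
          (ne_top_of_le_ne_top ENNReal.ofReal_ne_top hμ)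
    _ ≤ ENNReal.ofReal ((4 * t / (2 ^ j * t) ^ 2) ^ δ) *
          (ENNReal.ofReal (c₀ * (2 ^ j * t) ^ δ) * hardyLittlewoodMaximal μ g ω) := by
        gcongr
    _ = ENNReal.ofReal (c₀ * 4 ^ δ) * ENNReal.ofReal ((1 / 2) ^ δ) ^ j *
          hardyLittlewoodMaximal μ g ω := by
        rw [← mul_assoc, ← ENNReal.ofReal_mul (by positivity), mul_left_comm,
          rpow_dyadic_weight_mul_rpow_radius ht, ← mul_assoc,
          ENNReal.ofReal_mul' (by positivity), ENNReal.ofReal_pow (by positivity)]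

theorem lintegral_mul_poisson_le_hardyLittlewoodMaximal [OpensMeasurableSpace X]
    {μ : Measure X} {g : X → ℝ≥0∞} (hg : Measurable g) {ω : X} {t δ c₀ : ℝ} (ht : 0 < t)
    (hδ : 0 ≤ δ) (hgrowth : ∀ r, 0 < r → μ (ball ω r) ≤ ENNReal.ofReal (c₀ * r ^ δ)) :
    ∫⁻ ξ, g ξ * ENNReal.ofReal ((t / (dist ξ ω ^ 2 + t ^ 2)) ^ δ) ∂μ ≤
      ENNReal.ofReal (c₀ * 4 ^ δ) * (1 - ENNReal.ofReal ((1 / 2) ^ δ))⁻¹ *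
        hardyLittlewoodMaximal μ g ω := by
  set b : ℕ → ℝ≥0∞ := fun j => ENNReal.ofReal ((4 * t / (2 ^ j * t) ^ 2) ^ δ)
  have hpointwise : ∀ ξ, g ξ * ENNReal.ofReal ((t / (dist ξ ω ^ 2 + t ^ 2)) ^ δ) ≤
      ∑' j : ℕ, (ball ω (2 ^ j * t)).indicator (fun y => b j * g y) ξ := by
    intro ξ
    simp only [Set.indicator_mul_left, ENNReal.tsum_mul_right]
    rw [mul_comm]
    gcongr
    exact ofReal_poisson_le_tsum_indicator_ball ht hδ
  calc ∫⁻ ξ, g ξ * ENNReal.ofReal ((t / (dist ξ ω ^ 2 + t ^ 2)) ^ δ) ∂μ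
      ≤ ∫⁻ ξ, ∑' j : ℕ, (ball ω (2 ^ j * t)).indicator (fun y => b j * g y) ξ ∂μ :=
        lintegral_mono hpointwise
    _ = ∑' j : ℕ, ∫⁻ ξ, (ball ω (2 ^ j * t)).indicator (fun y => b j * g y) ξ ∂μ :=
        lintegral_tsum fun j =>
          ((measurable_const.mul hg).indicator measurableSet_ball).aemeasurable
    _ = ∑' j : ℕ, b j * ∫⁻ ξ in ball ω (2 ^ j * t), g ξ ∂μ := by
        simp only [lintegral_indicator measurableSet_ball, lintegral_const_mul _ hg]
    _ ≤ ∑' j : ℕ, ENNReal.ofReal (c₀ * 4 ^ δ) * ENNReal.ofReal ((1 / 2) ^ δ) ^ j *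
          hardyLittlewoodMaximal μ g ω :=
        ENNReal.tsum_le_tsum fun j => ofReal_dyadic_weight_mul_setLIntegral_le ht hgrowth j
    _ = _ := by rw [ENNReal.tsum_mul_right, ENNReal.tsum_mul_left, ENNReal.tsum_geometric]

end Poisson

lemma sq_dist_add_sq_le_of_dist_le {X : Type*} [PseudoMetricSpace X] {x ω ξ : X} {T t : ℝ}
    (hcone : dist x ω ≤ T * t) :
    dist ξ ω ^ 2 + t ^ 2 ≤ 2 * (1 + T ^ 2) * (dist ξ x ^ 2 + t ^ 2) := by
  have htri : dist ξ ω ≤ dist ξ x + T * t := (dist_triangle ξ x ω).trans (by gcongr)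
  have hsq : dist ξ ω ^ 2 ≤ (dist ξ x + T * t) ^ 2 := pow_le_pow_left₀ dist_nonneg htri 2
  nlinarith [sq_nonneg (dist ξ x - T * t), sq_nonneg (dist ξ x), sq_nonneg (T * t)]

section Cone

variable {E : Type*} [SeminormedAddCommGroup E]

lemma poisson_rpow_le_of_mem_cone {x ω ξ : E} {T t R δ : ℝ} (ht : 0 < t) (hδ : 0 ≤ δ)
    (hξ : ‖ξ‖ ≤ R) (hcone : ‖x - ω‖ ≤ T * t) :
    (t * (1 + ‖ξ‖ ^ 2) / (‖ξ - x‖ ^ 2 + t ^ 2)) ^ δ ≤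
      (2 * (1 + T ^ 2) * (1 + R ^ 2)) ^ δ * (t / (dist ξ ω ^ 2 + t ^ 2)) ^ δ := by
  rw [← dist_eq_norm] at hcone
  have hcomp := sq_dist_add_sq_le_of_dist_le (ξ := ξ) hcone
  rw [dist_eq_norm ξ x] at hcomp
  rw [← Real.mul_rpow (by positivity) (by positivity)]
  gcongr
  have hR : ‖ξ‖ ^ 2 ≤ R ^ 2 := pow_le_pow_left₀ (norm_nonneg ξ) hξ 2
  calc t * (1 + ‖ξ‖ ^ 2) / (‖ξ - x‖ ^ 2 + t ^ 2)
      ≤ t * (1 + R ^ 2) / (‖ξ - x‖ ^ 2 + t ^ 2) := by gcongr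
    _ = 2 * (1 + T ^ 2) * (1 + R ^ 2) * t / (2 * (1 + T ^ 2) * (‖ξ - x‖ ^ 2 + t ^ 2)) := by
        field_simp
    _ ≤ 2 * (1 + T ^ 2) * (1 + R ^ 2) * (t / (dist ξ ω ^ 2 + t ^ 2)) := by
        rw [← mul_div_assoc]
        gcongr

variable [MeasurableSpace E]

lemma lintegral_mul_poisson_le_of_mem_cone {μ : Measure E} {g : E → ℝ≥0∞} {R : ℝ}
    (hsupp : μ (closedBall 0 R)ᶜ = 0) {x ω : E} {T t δ : ℝ} (ht : 0 < t) (hδ : 0 ≤ δ)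
    (hcone : ‖x - ω‖ ≤ T * t) :
    ∫⁻ ξ, g ξ * ENNReal.ofReal ((t * (1 + ‖ξ‖ ^ 2) / (‖ξ - x‖ ^ 2 + t ^ 2)) ^ δ) ∂μ ≤
      ENNReal.ofReal ((2 * (1 + T ^ 2) * (1 + R ^ 2)) ^ δ) *
        ∫⁻ ξ, g ξ * ENNReal.ofReal ((t / (dist ξ ω ^ 2 + t ^ 2)) ^ δ) ∂μ := by
  rw [← lintegral_const_mul' _ _ ENNReal.ofReal_ne_top]
  refine lintegral_mono_ae ?_
  filter_upwards [mem_ae_iff.mpr hsupp] with ξ hξ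
  rw [mul_left_comm, ← ENNReal.ofReal_mul (by positivity)]
  gcongr
  exact poisson_rpow_le_of_mem_cone ht hδ (mem_closedBall_zero_iff.mp hξ) hcone

end Cone

theorem maximal_operator_le_hardyLittlewood_general
    (k : ℕ) (δ : ℝ) (hδ : 0 < δ)
    (μ : Measure (EuclideanSpace ℝ (Fin k)))
    (R : ℝ)
    (hsupp : μ (closedBall (0 : EuclideanSpace ℝ (Fin k)) R)ᶜ = 0)
    (c₀ : ℝ) (hc₀ : 0 < c₀)
    (hgrowth : ∀ (ω : EuclideanSpace ℝ (Fin k)) (r : ℝ), 0 < r →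
      μ (ball ω r) ≤ ENNReal.ofReal (c₀ * r ^ δ))
    (orbit : Set (EuclideanSpace ℝ (Fin k) × ℝ))
    (hpos : ∀ p ∈ orbit, 0 < p.2)
    (α : ℝ) :
    ∃ c : ℝ≥0∞, 0 < c ∧ c ≠ ⊤ ∧
      ∀ g : EuclideanSpace ℝ (Fin k) → ℝ≥0∞, Measurable g → (∫⁻ ξ, g ξ ∂μ) ≠ ⊤ →
        ∀ ω : EuclideanSpace ℝ (Fin k),
          (⨆ (p : EuclideanSpace ℝ (Fin k) × ℝ) (_ : p ∈ orbit)
              (_ : ‖p.1 - ω‖ ≤ Real.tan α * p.2),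
            ∫⁻ ξ, g ξ *
              ENNReal.ofReal ((p.2 * (1 + ‖ξ‖ ^ 2) / (‖ξ - p.1‖ ^ 2 + p.2 ^ 2)) ^ δ) ∂μ)
          ≤ c * ⨆ (r : ℝ) (_ : 0 < r),
              (μ (ball ω r))⁻¹ * ∫⁻ ξ in ball ω r, g ξ ∂μ := by
  set A := ENNReal.ofReal ((2 * (1 + Real.tan α ^ 2) * (1 + R ^ 2)) ^ δ)
  set B := ENNReal.ofReal (c₀ * 4 ^ δ) * (1 - ENNReal.ofReal ((1 / 2) ^ δ))⁻¹
  have hq : ENNReal.ofReal ((1 / 2) ^ δ) < 1 :=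
    ENNReal.ofReal_lt_one.mpr (Real.rpow_lt_one (by norm_num) (by norm_num) hδ)
  refine ⟨A * B, ?_, ?_, fun g hg _ ω => ?_⟩
  · refine ENNReal.mul_pos (ENNReal.ofReal_pos.mpr (by positivity)).ne' <|
      mul_ne_zero (ENNReal.ofReal_pos.mpr (by positivity)).ne' ?_
    exact ENNReal.inv_ne_zero.mpr (ENNReal.sub_ne_top ENNReal.one_ne_top)
  · exact ENNReal.mul_ne_top ENNReal.ofReal_ne_top
      (ENNReal.mul_ne_top ENNReal.ofReal_ne_top (ENNReal.inv_ne_top.mpr (tsub_pos_of_lt hq).ne'))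
  refine iSup₂_le fun p hp => iSup_le fun hcone => ?_
  calc _ ≤ A * ∫⁻ ξ, g ξ * ENNReal.ofReal ((p.2 / (dist ξ ω ^ 2 + p.2 ^ 2)) ^ δ) ∂μ :=
        lintegral_mul_poisson_le_of_mem_cone hsupp (hpos p hp) hδ.le hcone
    _ ≤ A * (B * hardyLittlewoodMaximal μ g ω) := by
        gcongr
        exact lintegral_mul_poisson_le_hardyLittlewoodMaximal hg (hpos p hp) hδ.le
          (hgrowth ω)
    _ = A * B * hardyLittlewoodMaximal μ g ω := (mul_assoc _ _ _).symm

/-- Domination of the maximal operator by the Hardy–Littlewood operator, in the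
half-space model: the boundary is `E = ℝ^{k-1}` (attention restricted to a fixed ball of
radius `R`, on which `μ = μ_O` is concentrated), the Patterson–Sullivan densities are
`dμ_{γO}(ξ) = (x_k (1+|ξ|²)/(|ξ-x'|²+x_k²))^δ dμ_O(ξ)` for the orbit point
`γO = (x', x_k)`, the cone `C_ω(α)` is the vertical cone of vertex `ω` and half-angle
`α`, and `μ` satisfies the growth bound `μ(B(ω,r)) ≤ c₀ rᵟ`.  Then there is a constant
`c = c(α)` such that for every nonnegative `g ∈ L¹(μ)` and every `ω`,
`M_α g(ω) ≤ c ⋅ N g(ω)`, where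
`M_α g(ω) = sup {∫ g dμ_{γO} : γO ∈ C_ω(α)}` and
`N g(ω) = sup_{r>0} μ(B(ω,r))⁻¹ ∫_{B(ω,r)} g dμ`. -/
theorem maximal_operator_le_hardyLittlewood
    (k : ℕ) (δ : ℝ) (hδ : 0 < δ)
    (μ : Measure (EuclideanSpace ℝ (Fin k))) [IsFiniteMeasure μ]
    (R : ℝ) (hR : 0 < R)
    (hsupp : μ (closedBall (0 : EuclideanSpace ℝ (Fin k)) R)ᶜ = 0)
    (c₀ : ℝ) (hc₀ : 0 < c₀)
    (hgrowth : ∀ (ω : EuclideanSpace ℝ (Fin k)) (r : ℝ), 0 < r →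
      μ (ball ω r) ≤ ENNReal.ofReal (c₀ * r ^ δ))
    (orbit : Set (EuclideanSpace ℝ (Fin k) × ℝ))
    (hpos : ∀ p ∈ orbit, 0 < p.2)
    (α : ℝ) (hα : α ∈ Set.Ioo 0 (Real.pi / 2)) :
    ∃ c : ℝ≥0∞, 0 < c ∧ c ≠ ⊤ ∧
      ∀ g : EuclideanSpace ℝ (Fin k) → ℝ≥0∞, Measurable g → (∫⁻ ξ, g ξ ∂μ) ≠ ⊤ →
        ∀ ω : EuclideanSpace ℝ (Fin k),
          (⨆ (p : EuclideanSpace ℝ (Fin k) × ℝ) (_ : p ∈ orbit)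
              (_ : ‖p.1 - ω‖ ≤ Real.tan α * p.2),
            ∫⁻ ξ, g ξ *
              ENNReal.ofReal ((p.2 * (1 + ‖ξ‖ ^ 2) / (‖ξ - p.1‖ ^ 2 + p.2 ^ 2)) ^ δ) ∂μ)
          ≤ c * ⨆ (r : ℝ) (_ : 0 < r),
              (μ (ball ω r))⁻¹ * ∫⁻ ξ in ball ω r, g ξ ∂μ :=
  maximal_operator_le_hardyLittlewood_general k δ hδ μ R hsupp c₀ hc₀ hgrowth orbit hpos α
end

section
/- Let Γ < Isom(ℍᵏ) be a non-elementary discrete group with Patterson–Sullivan measures {μ_x}, each of mass 1 on orbit points. For each f ∈ L¹(∂ℍᵏ, μ_O) there exists a μ_O-null set Z such that for every ω in the conical limit set outside Z and every sequence γ_i ∈ Γ with γ_iO converging conically to ω, one has ∫_{∂ℍᵏ} f(θ) dμ_{γ_iO}(θ) → f(ω). -/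
/-!
When `(x, t)` lies in a cone of aperture `a` over `ω`, the density `psDensity δ (x, t)` is
comparable, with constants depending only on `‖ω‖` and `a`, to the radial kernel
`K_t(r) = (t (1 + r²) / (r² + t²))^δ` evaluated at `r = ‖ξ - ω‖`. Since the measures
`μ_{(x, t)}` have mass one, these kernels have bounded mass; for `t ≤ 1` they are radially
decreasing, and off any ball around `ω` they tend to `0` with `t`. A layer-cake argument bounds
`∫ g K_t(‖ξ - ω‖)` over a small ball by that mass times the largest ball average of `g` around
`ω`. Taking `g = |f - f ω|` at a Lebesgue point `ω` of `f` (almost every point, by the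
Besicovitch differentiation theorem) yields `∫ f dμ_{(x, t)} → f ω`.
-/

open MeasureTheory Metric Filter Topology Set
open scoped ENNReal

lemma AntitoneOn.exists_superlevel_iff_le {K : ℝ → ℝ} (hKc : Continuous K)
    (hKa : AntitoneOn K (Ici 0)) {R s : ℝ} (h : ∃ r ∈ Icc 0 R, s ≤ K r) :
    ∃ ρ ∈ Icc 0 R, ∀ r ∈ Icc 0 R, s ≤ K r ↔ r ≤ ρ := by
  have hS : IsCompact (Icc 0 R ∩ K ⁻¹' Ici s) :=
    isCompact_Icc.inter_right (isClosed_Ici.preimage hKc)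
  obtain ⟨ρ, ⟨hρR, hρs⟩, hρmax⟩ := hS.exists_isGreatest h
  refine ⟨ρ, hρR, fun r hr => ⟨fun hs => hρmax ⟨hr, hs⟩, fun hrρ => ?_⟩⟩
  exact hρs.trans (hKa hr.1 hρR.1 hrρ)

section LayerCake

variable {X : Type*} [PseudoMetricSpace X] [MeasurableSpace X] [OpensMeasurableSpace X]
  {μ : Measure X} {ω : X} {g : X → ℝ≥0∞} {K : ℝ → ℝ}

theorem setLIntegral_closedBall_mul_radial_le (hg : AEMeasurable g μ) (hKc : Continuous K)
    (hK0 : ∀ r, 0 ≤ K r) (hKa : AntitoneOn K (Ici 0)) {R : ℝ} {ε : ℝ≥0∞}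
    (hball : ∀ r ∈ Icc 0 R, ∫⁻ ξ in closedBall ω r, g ξ ∂μ ≤ ε * μ (closedBall ω r)) :
    ∫⁻ ξ in closedBall ω R, g ξ * ENNReal.ofReal (K (dist ξ ω)) ∂μ
      ≤ ε * ∫⁻ ξ, ENNReal.ofReal (K (dist ξ ω)) ∂μ := by
  have hKm : Measurable fun ξ => K (dist ξ ω) :=
    (hKc.comp (continuous_id.dist continuous_const)).measurable
  set ν := (μ.restrict (closedBall ω R)).withDensity g
  -- The superlevel sets of a radially decreasing kernel are balls, where `hball` applies.
  have hlevel : ∀ s, ν {ξ | s ≤ K (dist ξ ω)} ≤ ε * μ {ξ | s ≤ K (dist ξ ω)} := by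
    intro s
    rw [withDensity_apply _ (measurableSet_le measurable_const hKm),
      Measure.restrict_restrict (measurableSet_le measurable_const hKm)]
    by_cases h : ∃ r ∈ Icc 0 R, s ≤ K r
    · obtain ⟨ρ, hρ, hiff⟩ := hKa.exists_superlevel_iff_le hKc h
      have hsub : {ξ | s ≤ K (dist ξ ω)} ∩ closedBall ω R ⊆ closedBall ω ρ :=
        fun ξ hξ => (hiff _ ⟨dist_nonneg, hξ.2⟩).1 hξ.1
      have hsub' : closedBall ω ρ ⊆ {ξ | s ≤ K (dist ξ ω)} :=
        fun ξ hξ => (hiff _ ⟨dist_nonneg, hξ.trans hρ.2⟩).2 hξ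
      calc ∫⁻ ξ in {ξ | s ≤ K (dist ξ ω)} ∩ closedBall ω R, g ξ ∂μ
          ≤ ∫⁻ ξ in closedBall ω ρ, g ξ ∂μ := lintegral_mono_set hsub
        _ ≤ ε * μ (closedBall ω ρ) := hball ρ hρ
        _ ≤ ε * μ {ξ | s ≤ K (dist ξ ω)} := by gcongr
    · have hempty : {ξ | s ≤ K (dist ξ ω)} ∩ closedBall ω R = ∅ :=
        eq_empty_of_forall_notMem fun ξ hξ => h ⟨_, ⟨dist_nonneg, hξ.2⟩, hξ.1⟩
      simp [hempty]
  have hmeas : Measurable fun s => μ {ξ | s ≤ K (dist ξ ω)} :=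
    Antitone.measurable fun s t hst => measure_mono fun ξ hξ => hst.trans hξ
  calc ∫⁻ ξ in closedBall ω R, g ξ * ENNReal.ofReal (K (dist ξ ω)) ∂μ
      = ∫⁻ ξ, ENNReal.ofReal (K (dist ξ ω)) ∂ν :=
        (lintegral_withDensity_eq_lintegral_mul₀ hg.restrict hKm.ennreal_ofReal.aemeasurable).symm
    _ = ∫⁻ s in Ioi 0, ν {ξ | s ≤ K (dist ξ ω)} :=
        lintegral_eq_lintegral_meas_le ν (.of_forall fun _ => hK0 _) hKm.aemeasurable
    _ ≤ ∫⁻ s in Ioi 0, ε * μ {ξ | s ≤ K (dist ξ ω)} := lintegral_mono hlevel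
    _ = ε * ∫⁻ ξ, ENNReal.ofReal (K (dist ξ ω)) ∂μ := by
        rw [lintegral_const_mul _ hmeas,
          lintegral_eq_lintegral_meas_le μ (.of_forall fun _ => hK0 _) hKm.aemeasurable]

end LayerCake

section LebesguePoint

variable {X E : Type*} [MetricSpace X] [MeasurableSpace X] [NormedAddCommGroup E]
  {μ : Measure X} {f : X → E} {ω : X}

def IsLebesguePoint (μ : Measure X) (f : X → E) (ω : X) : Prop :=
  Tendsto (fun r => (∫⁻ ξ in closedBall ω r, ‖f ξ - f ω‖ₑ ∂μ) / μ (closedBall ω r))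
    (𝓝[>] 0) (𝓝 0)

theorem ae_isLebesguePoint [SecondCountableTopology X] [BorelSpace X] [HasBesicovitchCovering X]
    [IsLocallyFiniteMeasure μ] (hf : LocallyIntegrable f μ) :
    ∀ᵐ ω ∂μ, IsLebesguePoint μ f ω := by
  filter_upwards [(Besicovitch.vitaliFamily μ).ae_tendsto_lintegral_enorm_sub_div hf] with ω hω
  exact hω.comp (Besicovitch.tendsto_filterAt μ ω)

theorem IsLebesguePoint.exists_setLIntegral_le [OpensMeasurableSpace X]
    (hω : IsLebesguePoint μ f ω) {ε : ℝ≥0∞} (hε : 0 < ε) :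
    ∃ R > 0, ∀ r ∈ Icc 0 R,
      ∫⁻ ξ in closedBall ω r, ‖f ξ - f ω‖ₑ ∂μ ≤ ε * μ (closedBall ω r) := by
  obtain ⟨R, hR, hRε⟩ := mem_nhdsGT_iff_exists_Ioc_subset.mp (hω.eventually (Iic_mem_nhds hε))
  refine ⟨R, hR, fun r hr => ?_⟩
  rcases hr.1.eq_or_lt with rfl | hr0
  · simp -- `closedBall ω 0 = {ω}`, where the integrand vanishes
  rcases eq_or_ne (μ (closedBall ω r)) 0 with hμ | hμ
  · simp [Measure.restrict_eq_zero.mpr hμ]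
  exact (ENNReal.div_le_iff_le_mul (.inl hμ) (.inr hε.ne')).1 (hRε ⟨hr0, hr.2⟩)

end LebesguePoint

theorem IsLebesguePoint.tendsto_lintegral_mul_radial {X E ι : Type*} [MetricSpace X]
    [MeasurableSpace X] [OpensMeasurableSpace X] [NormedAddCommGroup E] {μ : Measure X}
    [IsFiniteMeasure μ] {f : X → E} {ω : X} (hω : IsLebesguePoint μ f ω) (hf : Integrable f μ)
    {l : Filter ι} {K : ι → ℝ → ℝ} {M : ℝ≥0∞} (hKc : ∀ i, Continuous (K i))
    (hK0 : ∀ i r, 0 ≤ K i r) (hKa : ∀ᶠ i in l, AntitoneOn (K i) (Ici 0)) (hM : M ≠ ∞)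
    (hmass : ∀ᶠ i in l, ∫⁻ ξ, ENNReal.ofReal (K i (dist ξ ω)) ∂μ ≤ M)
    (hfar : ∀ R > 0, Tendsto (fun i => K i R) l (𝓝 0)) :
    Tendsto (fun i => ∫⁻ ξ, ‖f ξ - f ω‖ₑ * ENNReal.ofReal (K i (dist ξ ω)) ∂μ) l (𝓝 0) := by
  have hg : AEMeasurable (fun ξ => ‖f ξ - f ω‖ₑ) μ :=
    (hf.1.sub aestronglyMeasurable_const).enorm
  have hg_fin : ∫⁻ ξ, ‖f ξ - f ω‖ₑ ∂μ ≠ ∞ := (hf.sub (integrable_const (f ω))).2.ne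
  rw [ENNReal.tendsto_nhds_zero]
  intro ε hε
  obtain ⟨R, hR, hball⟩ :=
    hω.exists_setLIntegral_le (ENNReal.div_pos (ENNReal.half_pos hε.ne').ne' hM)
  have hsmall : ∀ᶠ i in l, ENNReal.ofReal (K i R) * ∫⁻ ξ, ‖f ξ - f ω‖ₑ ∂μ ≤ ε / 2 := by
    have h := ENNReal.Tendsto.mul_const (ENNReal.tendsto_ofReal (hfar R hR)) (.inr hg_fin)
    rw [ENNReal.ofReal_zero, zero_mul] at h
    exact h.eventually (Iic_mem_nhds (ENNReal.half_pos hε.ne'))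
  filter_upwards [hKa, hmass, hsmall] with i hanti hmass_i hsmall_i
  have hinner : ∫⁻ ξ in closedBall ω R, ‖f ξ - f ω‖ₑ * ENNReal.ofReal (K i (dist ξ ω)) ∂μ
      ≤ ε / 2 :=
    calc _ ≤ ε / 2 / M * ∫⁻ ξ, ENNReal.ofReal (K i (dist ξ ω)) ∂μ :=
          setLIntegral_closedBall_mul_radial_le hg (hKc i) (hK0 i) hanti hball
      _ ≤ ε / 2 / M * M := by gcongr
      _ ≤ ε / 2 := by rw [mul_comm]; exact ENNReal.mul_div_le
  have houter : ∫⁻ ξ in (closedBall ω R)ᶜ, ‖f ξ - f ω‖ₑ * ENNReal.ofReal (K i (dist ξ ω)) ∂μ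
      ≤ ε / 2 :=
    calc _ ≤ ∫⁻ ξ in (closedBall ω R)ᶜ, ‖f ξ - f ω‖ₑ * ENNReal.ofReal (K i R) ∂μ := by
          refine setLIntegral_mono' measurableSet_closedBall.compl fun ξ hξ => ?_
          have hRξ : R ≤ dist ξ ω := (not_le.mp (mem_closedBall.not.mp hξ)).le
          gcongr
          exact hanti hR.le (hR.le.trans hRξ) hRξ
      _ ≤ (∫⁻ ξ, ‖f ξ - f ω‖ₑ ∂μ) * ENNReal.ofReal (K i R) := by
          rw [lintegral_mul_const' _ _ ENNReal.ofReal_ne_top]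
          exact mul_le_mul_left (setLIntegral_le_lintegral _ _) _
      _ ≤ ε / 2 := by rw [mul_comm]; exact hsmall_i
  rw [← lintegral_add_compl _ measurableSet_closedBall, ← ENNReal.add_halves ε]
  exact add_le_add hinner houter

lemma one_add_sq_le_of_le_add {u v w : ℝ} (hu : 0 ≤ u) (h : u ≤ v + w) :
    1 + u ^ 2 ≤ 2 * (1 + v ^ 2) * (1 + w ^ 2) := by
  nlinarith [sq_nonneg (v - w), sq_nonneg (v * w)]

lemma sq_add_sq_le_of_le_add_mul {u v a t : ℝ} (hu : 0 ≤ u) (h : u ≤ v + a * t) :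
    u ^ 2 + t ^ 2 ≤ 2 * (1 + a ^ 2) * (v ^ 2 + t ^ 2) := by
  nlinarith [sq_nonneg (v - a * t), sq_nonneg (a * v), sq_nonneg t]

section Kernel

noncomputable def radialKernel (δ t r : ℝ) : ℝ := (t * (1 + r ^ 2) / (r ^ 2 + t ^ 2)) ^ δ

noncomputable def psDensity {E : Type*} [SeminormedAddCommGroup E] (δ : ℝ) (p : E × ℝ) (ξ : E) :
    ℝ :=
  (p.2 * (1 + ‖ξ‖ ^ 2) / (‖ξ - p.1‖ ^ 2 + p.2 ^ 2)) ^ δ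

variable {δ t : ℝ}

lemma radialKernel_nonneg (ht : 0 ≤ t) (r : ℝ) : 0 ≤ radialKernel δ t r :=
  Real.rpow_nonneg (by positivity) _

lemma continuous_radialKernel (hδ : 0 ≤ δ) (ht : 0 < t) : Continuous (radialKernel δ t) :=
  .rpow_const (.div (by fun_prop) (by fun_prop) fun r => by positivity) fun _ => .inr hδ

lemma antitoneOn_radialKernel (hδ : 0 ≤ δ) (ht : 0 < t) (ht1 : t ≤ 1) :
    AntitoneOn (radialKernel δ t) (Ici 0) := by
  intro r hr s hs hrs
  refine Real.rpow_le_rpow (by positivity) ?_ hδ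
  rw [div_le_div_iff₀ (by positivity) (by positivity)]
  have hrs2 : r ^ 2 ≤ s ^ 2 := pow_le_pow_left₀ hr hrs 2
  have ht2 : t ^ 2 ≤ 1 := pow_le_one₀ ht.le ht1
  nlinarith [mul_nonneg (mul_nonneg ht.le (sub_nonneg.2 hrs2)) (sub_nonneg.2 ht2)]

lemma radialKernel_le (hδ : 0 ≤ δ) (ht : 0 < t) (r : ℝ) :
    radialKernel δ t r ≤ (t + t⁻¹) ^ δ := by
  refine Real.rpow_le_rpow (by positivity) ?_ hδ
  rw [div_le_iff₀ (by positivity)]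
  have : t⁻¹ * t = 1 := inv_mul_cancel₀ ht.ne'
  nlinarith [mul_nonneg (inv_nonneg.2 ht.le) (sq_nonneg r), pow_pos ht 3]

lemma tendsto_radialKernel_zero (hδ : 0 < δ) {r : ℝ} (hr : r ≠ 0) :
    Tendsto (fun t => radialKernel δ t r) (𝓝 0) (𝓝 0) := by
  have hcont : ContinuousAt (fun t => radialKernel δ t r) 0 :=
    ContinuousAt.rpow_const (.div (by fun_prop) (by fun_prop) (by positivity)) (.inr hδ.le)
  simpa [radialKernel, Real.zero_rpow hδ.ne'] using hcont.tendsto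

lemma rpow_mul_div_le_mul_rpow {n₁ n₂ d₁ d₂ A B : ℝ} (hδ : 0 ≤ δ) (ht : 0 ≤ t) (hn₁ : 0 ≤ n₁)
    (hn₂ : 0 ≤ n₂) (hA : 0 ≤ A) (hd₁ : 0 < d₁) (hd₂ : 0 < d₂) (hn : n₁ ≤ A * n₂)
    (hd : d₂ ≤ B * d₁) :
    (t * n₁ / d₁) ^ δ ≤ (A * B) ^ δ * (t * n₂ / d₂) ^ δ := by
  have hB : 0 ≤ B := nonneg_of_mul_nonneg_left (hd₂.le.trans hd) hd₁
  rw [← Real.mul_rpow (by positivity) (by positivity)]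
  refine Real.rpow_le_rpow (by positivity) ?_ hδ
  calc t * n₁ / d₁ ≤ t * (A * n₂) / d₁ := by gcongr
    _ ≤ A * B * (t * n₂ / d₂) := by
      rw [div_le_iff₀ hd₁]
      calc t * (A * n₂) = A * (t * n₂) / d₂ * d₂ := by field_simp
        _ ≤ A * (t * n₂) / d₂ * (B * d₁) := by gcongr
        _ = A * B * (t * n₂ / d₂) * d₁ := by ring

variable {E : Type*} [SeminormedAddCommGroup E] {x ω : E} {a : ℝ}

lemma psDensity_nonneg {p : E × ℝ} (hp : 0 ≤ p.2) (ξ : E) : 0 ≤ psDensity δ p ξ :=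
  Real.rpow_nonneg (by positivity) _

lemma continuous_psDensity (hδ : 0 ≤ δ) {p : E × ℝ} (hp : 0 < p.2) :
    Continuous (psDensity δ p) :=
  .rpow_const (.div (by fun_prop) (by fun_prop) fun ξ => by positivity) fun _ => .inr hδ

lemma psDensity_le_mul_radialKernel (hδ : 0 ≤ δ) (ht : 0 < t) (hx : ‖x - ω‖ ≤ a * t) (ξ : E) :
    psDensity δ (x, t) ξ
      ≤ (2 * (1 + ‖ω‖ ^ 2) * (2 * (1 + a ^ 2))) ^ δ * radialKernel δ t (dist ξ ω) := by
  rw [psDensity, radialKernel, dist_eq_norm]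
  refine rpow_mul_div_le_mul_rpow hδ ht.le (by positivity) (by positivity) (by positivity)
    (by positivity) (by positivity) (one_add_sq_le_of_le_add (norm_nonneg _)
      (norm_le_insert' ξ ω)) (sq_add_sq_le_of_le_add_mul (norm_nonneg _) ?_)
  linarith [norm_sub_le_norm_sub_add_norm_sub ξ x ω]

lemma radialKernel_le_mul_psDensity (hδ : 0 ≤ δ) (ht : 0 < t) (hx : ‖x - ω‖ ≤ a * t) (ξ : E) :
    radialKernel δ t (dist ξ ω)
      ≤ (2 * (1 + ‖ω‖ ^ 2) * (2 * (1 + a ^ 2))) ^ δ * psDensity δ (x, t) ξ := by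
  rw [psDensity, radialKernel, dist_eq_norm]
  refine rpow_mul_div_le_mul_rpow hδ ht.le (by positivity) (by positivity) (by positivity)
    (by positivity) (by positivity) (one_add_sq_le_of_le_add (norm_nonneg _)
      ((norm_sub_le ξ ω).trans_eq (add_comm _ _))) (sq_add_sq_le_of_le_add_mul (norm_nonneg _) ?_)
  linarith [norm_sub_le_norm_sub_add_norm_sub ξ ω x, norm_sub_rev ω x]

lemma integrable_mul_psDensity [MeasurableSpace E] [OpensMeasurableSpace E] {μ : Measure E}
    {f : E → ℝ} (hf : Integrable f μ) (hδ : 0 ≤ δ) {p : E × ℝ} (hp : 0 < p.2) :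
    Integrable (fun ξ => f ξ * psDensity δ p ξ) μ := by
  obtain ⟨x, t⟩ := p
  have hbound : ∀ ξ, ‖psDensity δ (x, t) ξ‖
      ≤ (2 * (1 + ‖x‖ ^ 2) * (2 * (1 + 0 ^ 2))) ^ δ * (t + t⁻¹) ^ δ := fun ξ => by
    rw [Real.norm_of_nonneg (psDensity_nonneg hp.le ξ)]
    exact (psDensity_le_mul_radialKernel (ω := x) (a := 0) hδ hp (by simp) ξ).trans
      (by gcongr; exact radialKernel_le hδ hp _)
  exact hf.mul_bdd (continuous_psDensity hδ hp).aestronglyMeasurable (.of_forall hbound)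

end Kernel

theorem IsLebesguePoint.tendsto_lintegral_mul_psDensity {E F ι : Type*} [NormedAddCommGroup E]
    [MeasurableSpace E] [OpensMeasurableSpace E] [NormedAddCommGroup F] {μ : Measure E}
    [IsFiniteMeasure μ] {f : E → F} {ω : E} (hω : IsLebesguePoint μ f ω) (hf : Integrable f μ)
    {δ a : ℝ} (hδ : 0 < δ) {l : Filter ι} {p : ι → E × ℝ} (hp : ∀ i, 0 < (p i).2)
    (hmass : ∀ i, ∫ ξ, psDensity δ (p i) ξ ∂μ = 1) (hcone : ∀ i, ‖(p i).1 - ω‖ ≤ a * (p i).2)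
    (ht : Tendsto (fun i => (p i).2) l (𝓝 0)) :
    Tendsto (fun i => ∫⁻ ξ, ‖f ξ - f ω‖ₑ * ENNReal.ofReal (psDensity δ (p i) ξ) ∂μ) l (𝓝 0) := by
  set C := (2 * (1 + ‖ω‖ ^ 2) * (2 * (1 + a ^ 2))) ^ δ
  have hradial_mass : ∀ i, ∫⁻ ξ, ENNReal.ofReal (radialKernel δ (p i).2 (dist ξ ω)) ∂μ
      ≤ ENNReal.ofReal C := fun i =>
    calc _ ≤ ∫⁻ ξ, ENNReal.ofReal C * ENNReal.ofReal (psDensity δ (p i) ξ) ∂μ :=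
          lintegral_mono fun ξ => by
            rw [← ENNReal.ofReal_mul (by positivity)]
            exact ENNReal.ofReal_le_ofReal (radialKernel_le_mul_psDensity hδ.le (hp i) (hcone i) ξ)
      _ = ENNReal.ofReal C := by
          rw [lintegral_const_mul' _ _ ENNReal.ofReal_ne_top,
            ← ofReal_integral_eq_lintegral_ofReal (.of_integral_ne_zero (by simp [hmass i]))
              (.of_forall (psDensity_nonneg (hp i).le)), hmass i, ENNReal.ofReal_one, mul_one]
  have hK := hω.tendsto_lintegral_mul_radial hf (K := fun i => radialKernel δ (p i).2)
    (fun i => continuous_radialKernel hδ.le (hp i)) (fun i => radialKernel_nonneg (hp i).le)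
    (by filter_upwards [ht.eventually (Iic_mem_nhds one_pos)] with i hi
        exact antitoneOn_radialKernel hδ.le (hp i) hi)
    ENNReal.ofReal_ne_top (.of_forall hradial_mass)
    fun R hR => (tendsto_radialKernel_zero hδ hR.ne').comp ht
  have hCK := ENNReal.Tendsto.const_mul (a := ENNReal.ofReal C) hK (.inr ENNReal.ofReal_ne_top)
  rw [mul_zero] at hCK
  refine tendsto_of_tendsto_of_tendsto_of_le_of_le tendsto_const_nhds hCK (fun _ => zero_le)
    fun i => ?_
  rw [← lintegral_const_mul' _ _ ENNReal.ofReal_ne_top]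
  refine lintegral_mono fun ξ => ?_
  rw [mul_left_comm, ← ENNReal.ofReal_mul (by positivity)]
  gcongr
  exact psDensity_le_mul_radialKernel hδ.le (hp i) (hcone i) ξ

theorem tendsto_integral_mul_of_tendsto_lintegral {α ι : Type*} [MeasurableSpace α]
    {μ : Measure α} {l : Filter ι} {f : α → ℝ} {d : ι → α → ℝ} {c : ℝ}
    (hd0 : ∀ i x, 0 ≤ d i x) (hd1 : ∀ i, ∫ x, d i x ∂μ = 1)
    (hfd : ∀ i, Integrable (fun x => f x * d i x) μ)
    (h : Tendsto (fun i => ∫⁻ x, ‖f x - c‖ₑ * ENNReal.ofReal (d i x) ∂μ) l (𝓝 0)) :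
    Tendsto (fun i => ∫ x, f x * d i x ∂μ) l (𝓝 c) := by
  rw [tendsto_iff_edist_tendsto_0]
  refine tendsto_of_tendsto_of_tendsto_of_le_of_le tendsto_const_nhds h (fun _ => zero_le)
    fun i => ?_
  have hd : Integrable (d i) μ := .of_integral_ne_zero (by simp [hd1 i])
  have hsub : ∫ x, f x * d i x ∂μ - c = ∫ x, (f x - c) * d i x ∂μ := by
    simp_rw [sub_mul]
    rw [integral_sub (hfd i) (hd.const_mul c), integral_const_mul, hd1 i, mul_one]
  calc edist (∫ x, f x * d i x ∂μ) c = ‖∫ x, (f x - c) * d i x ∂μ‖ₑ := by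
        rw [edist_eq_enorm_sub, hsub]
    _ ≤ ∫⁻ x, ‖(f x - c) * d i x‖ₑ ∂μ := enorm_integral_le_lintegral_enorm _
    _ = _ := by simp_rw [enorm_mul, Real.enorm_of_nonneg (hd0 i _)]

/-- Almost-everywhere convergence along cones: work in the half-space model, where the
boundary of `ℍᵏ` is `E = ℝ^{k-1}`, the orbit `Γ·O` consists of points `(x', x_k)` with
`x_k > 0`, and the Patterson–Sullivan measures on orbit points have densities
`dμ_{γO}(ξ) = (x_k (1+|ξ|²)/(|ξ-x'|²+x_k²))^δ dμ_O(ξ)`, each of total mass `1`.  For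
each `f ∈ L¹(μ_O)` there is a `μ_O`-null set `Z` such that for every `ω ∉ Z` and every
sequence of orbit points converging to `ω` conically (i.e. inside a vertical cone
`C_ω(α)`, `α < π/2`), the integrals `∫ f dμ_{γᵢO}` converge to `f ω`. -/
theorem ae_convergence_along_cones
    (k : ℕ) (δ : ℝ) (hδ : 0 < δ)
    (μ : Measure (EuclideanSpace ℝ (Fin k))) [IsFiniteMeasure μ]
    (orbit : Set (EuclideanSpace ℝ (Fin k) × ℝ))
    (hpos : ∀ p ∈ orbit, 0 < p.2)
    (dens : EuclideanSpace ℝ (Fin k) × ℝ → EuclideanSpace ℝ (Fin k) → ℝ)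
    (hdens : ∀ p ξ, dens p ξ = (p.2 * (1 + ‖ξ‖ ^ 2) / (‖ξ - p.1‖ ^ 2 + p.2 ^ 2)) ^ δ)
    -- `‖μ_x‖ = 1` for all orbit points
    (hmass : ∀ p ∈ orbit, ∫ ξ, dens p ξ ∂μ = 1)
    (f : EuclideanSpace ℝ (Fin k) → ℝ) (hf : Integrable f μ) :
    ∃ Z : Set (EuclideanSpace ℝ (Fin k)), μ Z = 0 ∧
      ∀ ω : EuclideanSpace ℝ (Fin k), ω ∉ Z →
        ∀ p : ℕ → EuclideanSpace ℝ (Fin k) × ℝ, (∀ i, p i ∈ orbit) →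
          -- conical convergence of the orbit sequence to ω:
          (∃ α ∈ Set.Ioo 0 (Real.pi / 2), ∀ i, ‖(p i).1 - ω‖ ≤ Real.tan α * (p i).2) →
          Tendsto (fun i => ‖(p i).1 - ω‖ ^ 2 + (p i).2 ^ 2) atTop (𝓝 0) →
          Tendsto (fun i => ∫ ξ, f ξ * dens (p i) ξ ∂μ) atTop (𝓝 (f ω)) := by
  obtain rfl : dens = psDensity δ := funext fun p => funext (hdens p)
  refine ⟨{ω | ¬ IsLebesguePoint μ f ω}, ae_iff.mp (ae_isLebesguePoint hf.locallyIntegrable), ?_⟩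
  rintro ω hω p hp ⟨α, -, hcone⟩ hconv
  have ht : Tendsto (fun i => (p i).2) atTop (𝓝 0) := by
    refine squeeze_zero_norm (a := fun i => √(‖(p i).1 - ω‖ ^ 2 + (p i).2 ^ 2))
      (fun i => Real.abs_le_sqrt (le_add_of_nonneg_left (sq_nonneg _))) ?_
    simpa using hconv.sqrt
  refine tendsto_integral_mul_of_tendsto_lintegral (fun i => psDensity_nonneg (hpos _ (hp i)).le)
    (fun i => hmass _ (hp i)) (fun i => integrable_mul_psDensity hf hδ.le (hpos _ (hp i))) ?_
  exact (not_not.mp hω).tendsto_lintegral_mul_psDensity hf hδ (fun i => hpos _ (hp i))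
    (fun i => hmass _ (hp i)) hcone ht
end
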